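/- arXiv:2405.16696 — 2 statements merged into one kernel-verified Lean document; each statement's English description precedes it below -/
import Mathlib

section
/- For integers d ≥ 10 and 1 ≤ d' ≤ d/10, there exists a subset A of the binary vectors in {0,1}^d of Hamming weight exactly d' such that |A| ≥ sqrt(binomial(d, d')) and any two distinct elements of A have Hamming distance at least d'/5. -/
/-!
Greedy (Gilbert–Varshamov) argument. A maximal set `A` of weight-`d'` words with pairwise
distances at least `d'/5` covers the set `S` of all weight-`d'` words by the balls of radius
`< d'/5` around its elements. Two words of weight `d'` are at distance `2j`, where `j` ones of
one word lie outside the support of the other; hence such a ball has at most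
`∑_{j ≤ t} C(d', j) C(d - d', j)` elements, `t = ⌊(d' - 1)/10⌋`. The terms of this sum at
least double from one to the next, so it is at most twice its last term, whose square is below
`(d/d')^d' ≤ C(d, d') = |S|`. Thus `|S| ≤ |A| √|S|`.
-/

open Finset
open scoped Nat

theorem Finset.sum_range_succ_le_two_mul {f : ℕ → ℕ} {t : ℕ}
    (hf : ∀ j < t, 2 * f j ≤ f (j + 1)) : ∑ j ∈ range (t + 1), f j ≤ 2 * f t := by
  induction t with
  | zero => simp; omega
  | succ t ih =>
    rw [sum_range_succ]
    have := ih fun j hj => hf j (by omega)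
    have := hf t t.lt_succ_self
    omega

namespace Nat

theorem pow_le_pow_mul_choose {n k : ℕ} (h : k ≤ n) : n ^ k ≤ k ^ k * n.choose k := by
  have key : ∏ i ∈ range k, n * (k - i) ≤ ∏ i ∈ range k, k * (n - i) := by
    refine prod_le_prod' fun i _ => ?_
    rw [Nat.mul_sub, Nat.mul_sub, mul_comm n k]
    exact Nat.sub_le_sub_left (Nat.mul_le_mul_right i h) _
  rw [prod_mul_distrib, prod_mul_distrib, prod_const, prod_const, card_range,
    ← descFactorial_eq_prod_range, ← descFactorial_eq_prod_range, descFactorial_self,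
    descFactorial_eq_factorial_mul_choose, mul_left_comm, mul_comm] at key
  exact Nat.le_of_mul_le_mul_left key k.factorial_pos

theorem pow_self_le_three_pow_mul_factorial (t : ℕ) : t ^ t ≤ 3 ^ t * t ! := by
  have h := Real.pow_div_factorial_le_exp (t : ℝ) t.cast_nonneg t
  rw [div_le_iff₀ (by positivity), ← Real.exp_one_pow] at h
  have h3 : Real.exp 1 ^ t ≤ 3 ^ t := pow_le_pow_left₀ (Real.exp_pos 1).le
    (Real.exp_one_lt_d9.trans (by norm_num)).le t
  exact_mod_cast h.trans (mul_le_mul_of_nonneg_right h3 (by positivity))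

theorem choose_mul_choose_mul_factorial_sq_le (a b j : ℕ) :
    a.choose j * b.choose j * j ! ^ 2 ≤ (a * b) ^ j := by
  calc a.choose j * b.choose j * j ! ^ 2 = (j ! * a.choose j) * (j ! * b.choose j) := by ring
    _ ≤ a ^ j * b ^ j := by
      rw [← descFactorial_eq_factorial_mul_choose, ← descFactorial_eq_factorial_mul_choose]
      exact Nat.mul_le_mul (descFactorial_le_pow a j) (descFactorial_le_pow b j)
    _ = (a * b) ^ j := (mul_pow a b j).symm

theorem two_mul_choose_mul_choose_le {a b j : ℕ} (h : 2 * (j + 1) ^ 2 ≤ (a - j) * (b - j)) :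
    2 * (a.choose j * b.choose j) ≤ a.choose (j + 1) * b.choose (j + 1) := by
  refine Nat.le_of_mul_le_mul_right ?_ (pow_pos j.succ_pos 2)
  calc 2 * (a.choose j * b.choose j) * (j + 1) ^ 2
      = a.choose j * b.choose j * (2 * (j + 1) ^ 2) := by ring
    _ ≤ a.choose j * b.choose j * ((a - j) * (b - j)) := Nat.mul_le_mul_left _ h
    _ = a.choose (j + 1) * (j + 1) * (b.choose (j + 1) * (j + 1)) := by
      rw [choose_succ_right_eq, choose_succ_right_eq]; ring
    _ = a.choose (j + 1) * b.choose (j + 1) * (j + 1) ^ 2 := by ring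

/-- With `k ≤ 20 t`, `t! ≥ (t/3)^t` and `n^k ≤ k^k C(n, k)`, this reduces to
`4 · 60^(4t) ≤ 10^(k - 2t)`, where `k - 2t ≥ 8t + 1`. -/
theorem four_mul_sq_choose_mul_choose_le {n k t : ℕ} (hk : 10 * t < k) (hk' : k ≤ 10 * t + 10)
    (hn : 10 * k ≤ n) : 4 * (k.choose t * (n - k).choose t) ^ 2 ≤ n.choose k := by
  set a := k.choose t * (n - k).choose t
  obtain ⟨s, hks⟩ : ∃ s, 2 * t + s = k := ⟨k - 2 * t, by omega⟩
  have ha : a * t ! ^ 2 ≤ (k * n) ^ t :=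
    (choose_mul_choose_mul_factorial_sq_le k (n - k) t).trans
      (Nat.pow_le_pow_left (Nat.mul_le_mul_left k (n.sub_le k)) t)
  have hkt : k ^ t ≤ 60 ^ t * t ! := by
    rcases t.eq_zero_or_pos with rfl | ht
    · simp
    calc k ^ t ≤ (20 * t) ^ t := Nat.pow_le_pow_left (by omega) t
      _ = 20 ^ t * t ^ t := mul_pow 20 t t
      _ ≤ 20 ^ t * (3 ^ t * t !) := Nat.mul_le_mul_left _ (pow_self_le_three_pow_mul_factorial t)
      _ = 60 ^ t * t ! := by rw [← mul_assoc, ← mul_pow]; norm_num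
  have hconst : 4 * 60 ^ (4 * t) ≤ 10 ^ s :=
    calc 4 * 60 ^ (4 * t) ≤ 10 * 10 ^ (8 * t) := by
          rw [pow_mul, pow_mul]; norm_num
          exact Nat.mul_le_mul (by norm_num) (Nat.pow_le_pow_left (by norm_num) t)
      _ ≤ 10 ^ s := by rw [← pow_succ']; exact Nat.pow_le_pow_right (by norm_num) (by omega)
  have hns : 10 ^ s * k ^ s ≤ n ^ s := by rw [← mul_pow]; exact Nat.pow_le_pow_left hn s
  have hchoose := pow_le_pow_mul_choose (show k ≤ n by omega)
  have hkk : k ^ k = k ^ (2 * t) * k ^ s := by rw [← pow_add, hks]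
  have hnk : n ^ k = n ^ s * n ^ (2 * t) := by rw [← pow_add, add_comm, hks]
  refine Nat.le_of_mul_le_mul_right (c := t ! ^ 4 * k ^ k) ?_
    (Nat.mul_pos (pow_pos t.factorial_pos 4) (pow_pos (by omega) k))
  calc 4 * a ^ 2 * (t ! ^ 4 * k ^ k) = 4 * (a * t ! ^ 2) ^ 2 * k ^ k := by ring
    _ ≤ 4 * ((k * n) ^ t) ^ 2 * k ^ k := by gcongr
    _ = 4 * (k ^ t) ^ 4 * k ^ s * n ^ (2 * t) := by rw [hkk]; ring
    _ ≤ 4 * (60 ^ t * t !) ^ 4 * k ^ s * n ^ (2 * t) := by gcongr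
    _ = 4 * 60 ^ (4 * t) * k ^ s * n ^ (2 * t) * t ! ^ 4 := by ring
    _ ≤ 10 ^ s * k ^ s * n ^ (2 * t) * t ! ^ 4 := by gcongr
    _ ≤ n ^ s * n ^ (2 * t) * t ! ^ 4 := by gcongr
    _ = n ^ k * t ! ^ 4 := by rw [hnk]
    _ ≤ k ^ k * n.choose k * t ! ^ 4 := by gcongr
    _ = n.choose k * (t ! ^ 4 * k ^ k) := by ring

theorem sq_sum_choose_mul_choose_le {n k t : ℕ} (hk : 10 * t < k) (hk' : k ≤ 10 * t + 10)
    (hn : 10 * k ≤ n) :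
    (∑ j ∈ range (t + 1), k.choose j * (n - k).choose j) ^ 2 ≤ n.choose k := by
  have hsum : ∑ j ∈ range (t + 1), k.choose j * (n - k).choose j ≤
      2 * (k.choose t * (n - k).choose t) :=
    sum_range_succ_le_two_mul fun j hj => two_mul_choose_mul_choose_le <|
      calc 2 * (j + 1) ^ 2 = (j + 1) * (2 * (j + 1)) := by ring
        _ ≤ (k - j) * (n - k - j) := Nat.mul_le_mul (by omega) (by omega)
  calc _ ≤ (2 * (k.choose t * (n - k).choose t)) ^ 2 := Nat.pow_le_pow_left hsum 2
    _ = 4 * (k.choose t * (n - k).choose t) ^ 2 := by ring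
    _ ≤ n.choose k := four_mul_sq_choose_mul_choose_le hk hk' hn

end Nat

theorem Finset.exists_maximal_separated {α : Type*} (S : Finset α)
    (r : α → α → Prop) (hr : ∀ a, r a a) (hr' : ∀ a b, r a b → r b a) :
    ∃ A ⊆ S, (A : Set α).Pairwise (fun a b => ¬ r a b) ∧
      ∀ u ∈ S, ∃ a ∈ A, r u a := by
  classical
  obtain ⟨A, hAmax⟩ := (S.powerset.filter fun A : Finset α =>
    (A : Set α).Pairwise fun a b => ¬ r a b).exists_maximal ⟨∅, by simp⟩
  obtain ⟨hAS, hAsep⟩ : A ⊆ S ∧ (A : Set α).Pairwise fun a b => ¬ r a b := by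
    simpa using hAmax.prop
  refine ⟨A, hAS, hAsep, fun u hu => ?_⟩
  by_contra! hfar
  have huA : u ∉ A := fun h => hfar u h (hr u)
  have hsep : ((insert u A : Finset α) : Set α).Pairwise fun a b => ¬ r a b := by
    rw [coe_insert]
    exact hAsep.insert fun a ha _ => ⟨hfar a ha, fun h => hfar a ha (hr' _ _ h)⟩
  have := hAmax.2 (mem_filter.2 ⟨mem_powerset.2 (insert_subset hu hAS), hsep⟩)
    (subset_insert u A)
  exact huA (this (mem_insert_self u A))

theorem Finset.exists_separated_card_le_mul {α : Type*} [DecidableEq α] (S : Finset α)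
    (r : α → α → Prop) [DecidableRel r] (hr : ∀ a, r a a) (hr' : ∀ a b, r a b → r b a)
    {V : ℕ} (hV : ∀ a ∈ S, #{u ∈ S | r u a} ≤ V) :
    ∃ A ⊆ S, (A : Set α).Pairwise (fun a b => ¬ r a b) ∧ #S ≤ #A * V := by
  obtain ⟨A, hAS, hAsep, hcover⟩ := S.exists_maximal_separated r hr hr'
  refine ⟨A, hAS, hAsep, ?_⟩
  calc #S ≤ #(A.biUnion fun a => {u ∈ S | r u a}) := card_le_card fun u hu => by
        obtain ⟨a, ha, hua⟩ := hcover u hu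
        exact mem_biUnion.2 ⟨a, ha, mem_filter.2 ⟨hu, hua⟩⟩
    _ ≤ ∑ a ∈ A, #{u ∈ S | r u a} := card_biUnion_le
    _ ≤ #A * V := sum_le_card_nsmul A _ V fun a ha => hV a (hAS ha)

namespace BinaryCode

variable {ι : Type*} [Fintype ι]

def support (w : ι → Bool) : Finset ι := {i | w i = true}

theorem support_injective : Function.Injective (support : (ι → Bool) → Finset ι) := by
  intro u w h
  funext i
  have := congrArg (i ∈ ·) h
  simp only [support, mem_filter, mem_univ, true_and] at this
  exact Bool.eq_iff_iff.2 (Iff.of_eq this)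

variable [DecidableEq ι]

theorem support_decide_mem (s : Finset ι) : support (fun i => decide (i ∈ s)) = s := by
  ext i
  simp [support]

theorem card_filter_card_support_eq (k : ℕ) :
    #{w : ι → Bool | #(support w) = k} = (Fintype.card ι).choose k := by
  rw [← card_univ, ← card_powersetCard]
  refine card_nbij' support (fun s i => decide (i ∈ s)) ?_ ?_ ?_ ?_
  · intro w hw
    simpa using hw
  · intro s hs
    simpa [support_decide_mem] using hs
  · intro w _
    funext i
    simp [support]
  · intro s _
    exact support_decide_mem s

theorem hammingDist_eq_card_sdiff_add_card_sdiff (u w : ι → Bool) :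
    hammingDist u w = #(support w \ support u) + #(support u \ support w) := by
  rw [hammingDist, ← card_union_of_disjoint disjoint_sdiff_sdiff]
  congr 1
  ext i
  cases hu : u i <;> cases hw : w i <;> simp [support, hu, hw]

theorem hammingDist_eq_two_mul_card_sdiff {u w : ι → Bool} (h : #(support u) = #(support w)) :
    hammingDist u w = 2 * #(support w \ support u) := by
  rw [hammingDist_eq_card_sdiff_add_card_sdiff, card_sdiff_comm h.symm, two_mul]

theorem card_sphere_le {w : ι → Bool} {k : ℕ} (hw : #(support w) = k) (j : ℕ) :
    #{u : ι → Bool | #(support u) = k ∧ #(support w \ support u) = j} ≤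
      k.choose j * (Fintype.card ι - k).choose j := by
  set s := support w
  rw [← hw, ← card_compl, ← card_powersetCard, ← card_powersetCard, ← card_product]
  refine card_le_card_of_injOn (fun u => (s \ support u, support u \ s)) ?_ ?_
  · intro u hu
    simp only [coe_filter, Set.mem_ofPred_eq, mem_univ, true_and] at hu
    simp only [coe_product, Set.mem_prod, mem_coe, mem_powersetCard]
    refine ⟨⟨sdiff_subset, hu.2⟩, fun i hi => mem_compl.2 (mem_sdiff.1 hi).2, ?_⟩
    rw [card_sdiff_comm hu.1, hu.2]
  · intro u _ u' _ h
    apply support_injective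
    apply symmDiff_right_injective s
    simp only [Prod.mk.injEq] at h
    show symmDiff s (support u) = symmDiff s (support u')
    rw [symmDiff_def, symmDiff_def, sup_eq_union, sup_eq_union, h.1, h.2]

theorem card_ball_le {w : ι → Bool} {k : ℕ} (hw : #(support w) = k) (t : ℕ) :
    #{u : ι → Bool | #(support u) = k ∧ hammingDist u w < 2 * (t + 1)} ≤
      ∑ j ∈ range (t + 1), k.choose j * (Fintype.card ι - k).choose j := by
  calc _ ≤ #((range (t + 1)).biUnion fun j =>
        {u : ι → Bool | #(support u) = k ∧ #(support w \ support u) = j}) := by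
        refine card_le_card fun u hu => ?_
        simp only [mem_filter, mem_univ, true_and] at hu
        rw [hammingDist_eq_two_mul_card_sdiff (hu.1.trans hw.symm)] at hu
        simp only [mem_biUnion, mem_range, mem_filter, mem_univ, true_and]
        exact ⟨_, by omega, hu.1, rfl⟩
    _ ≤ _ := card_biUnion_le.trans (sum_le_sum fun j _ => card_sphere_le hw j)

end BinaryCode

open BinaryCode in
theorem exists_constant_weight_code_general (d d' : ℕ) (hd'1 : 1 ≤ d')
    (hd' : 10 * d' ≤ d) :
    ∃ A : Finset (Fin d → Bool),
      (∀ w ∈ A, (Finset.univ.filter fun i => w i = true).card = d') ∧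
      Real.sqrt (Nat.choose d d') ≤ A.card ∧
      ∀ w ∈ A, ∀ w' ∈ A, w ≠ w' → (d' : ℝ) / 5 ≤ hammingDist w w' := by
  set t := (d' - 1) / 10
  set V := ∑ j ∈ range (t + 1), d'.choose j * (d - d').choose j
  set S : Finset (Fin d → Bool) := {w | #(support w) = d'}
  have hV : ∀ w ∈ S, #{u ∈ S | 5 * hammingDist u w < d'} ≤ V := fun w hw => by
    refine (card_le_card fun u hu => ?_).trans
      (Fintype.card_fin d ▸ card_ball_le (mem_filter.1 hw).2 t)
    simp only [S, mem_filter, mem_univ, true_and] at hu ⊢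
    exact ⟨hu.1, by omega⟩
  obtain ⟨A, hAS, hAsep, hcard⟩ := S.exists_separated_card_le_mul
    (fun u w => 5 * hammingDist u w < d') (fun _ => by simp; omega)
    (fun u w h => by rwa [hammingDist_comm]) hV
  have hS : #S = d.choose d' := by simpa using card_filter_card_support_eq (ι := Fin d) d'
  have hV2 : V ^ 2 ≤ d.choose d' := Nat.sq_sum_choose_mul_choose_le (by omega) (by omega) hd'
  have hA2 : d.choose d' ≤ #A ^ 2 := by nlinarith
  refine ⟨A, fun w hw => (mem_filter.1 (hAS hw)).2, ?_, fun w hw w' hw' hne => ?_⟩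
  · rw [Real.sqrt_le_left (by positivity)]
    exact_mod_cast hA2
  · have := not_lt.1 (hAsep hw hw' hne)
    rw [div_le_iff₀ (by norm_num), mul_comm]
    exact_mod_cast this

/-- Varshamov–Gilbert-type packing lemma for constant-weight binary codes:
for `d ≥ 10` and `1 ≤ d' ≤ d/10`, there is a set `A` of binary vectors of Hamming
weight exactly `d'`, of cardinality at least `√(C(d, d'))`, whose distinct elements
are pairwise at Hamming distance at least `d'/5`. -/
theorem exists_constant_weight_code (d d' : ℕ) (hd : 10 ≤ d) (hd'1 : 1 ≤ d')
    (hd' : 10 * d' ≤ d) :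
    ∃ A : Finset (Fin d → Bool),
      (∀ w ∈ A, (Finset.univ.filter fun i => w i = true).card = d') ∧
      Real.sqrt (Nat.choose d d') ≤ A.card ∧
      ∀ w ∈ A, ∀ w' ∈ A, w ≠ w' → (d' : ℝ) / 5 ≤ hammingDist w w' :=
  exists_constant_weight_code_general d d' hd'1 hd'
end

section
/- Global and local metric entropies satisfy M(δ/2) − M(δ) ≤ M^loc(δ) ≤ M(δ/2), where M(δ) is the log of the maximal δ-packing number of a totally bounded metric space S, and M^loc(δ) is the maximal over θ ∈ S of the log of the largest (δ/2)-packing of the ball B(θ, δ). -/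
/-!
A maximum `δ`-packing `P` of `S` is a `δ`-net: a point farther than `δ` from all of `P` could be
added to it. Sending each point of a maximum `δ/2`-packing to a nearby point of `P` therefore
splits it into `|P|` pieces, each a `δ/2`-packing of some ball `B(θ, δ)`, so
`exp M(δ/2) ≤ exp M(δ) · exp M^loc(δ)`. The upper bound is monotonicity of packing numbers.
-/

open Metric

/-- The maximal cardinality of a `δ`-packing of the set `B`: the largest size of a
finite subset of `B` whose points are pairwise at distance at least `δ`. -/
noncomputable def packNum {S : Type*} [PseudoMetricSpace S] (B : Set S) (δ : ℝ) : ℕ :=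
  sSup {n | ∃ P : Finset S, ↑P ⊆ B ∧
    (∀ x ∈ P, ∀ y ∈ P, x ≠ y → δ ≤ dist x y) ∧ P.card = n}

open Set

section Packing

variable {S : Type*} [PseudoMetricSpace S] {B B' : Set S} {δ ε : ℝ}

/-- `packNum B δ` is definitionally `sSup (packingCards B δ)`. -/
def packingCards (B : Set S) (δ : ℝ) : Set ℕ :=
  {n | ∃ P : Finset S, ↑P ⊆ B ∧ (P : Set S).Pairwise (δ ≤ dist · ·) ∧ P.card = n}

theorem bddAbove_packingCards (hB : TotallyBounded B) (hδ : 0 < δ) :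
    BddAbove (packingCards B δ) := by
  obtain ⟨t, ht, hcover⟩ := Metric.totallyBounded_iff.1 hB (δ / 2) (half_pos hδ)
  have hcenter : ∀ x ∈ B, ∃ y ∈ ht.toFinset, dist x y < δ / 2 := fun x hx => by
    simpa using hcover hx
  choose! c hct hc using hcenter
  refine ⟨ht.toFinset.card, ?_⟩
  rintro _ ⟨P, hPB, hP, rfl⟩
  refine Finset.card_le_card_of_injOn c (fun x hx => hct x (hPB hx)) fun x hx y hy hxy => ?_
  by_contra hne
  have hclose : dist x y < δ :=
    calc dist x y ≤ dist x (c x) + dist y (c y) := hxy ▸ dist_triangle_right x y (c x)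
      _ < δ / 2 + δ / 2 := add_lt_add (hc x (hPB hx)) (hc y (hPB hy))
      _ = δ := add_halves δ
  exact (hP hx hy hne).not_gt hclose

theorem card_le_packNum (hB : TotallyBounded B) (hδ : 0 < δ) {P : Finset S} (hPB : ↑P ⊆ B)
    (hP : (P : Set S).Pairwise (δ ≤ dist · ·)) : P.card ≤ packNum B δ :=
  le_csSup (bddAbove_packingCards hB hδ) ⟨P, hPB, hP, rfl⟩

theorem exists_packing_card_eq_packNum (hB : TotallyBounded B) (hδ : 0 < δ) :
    ∃ P : Finset S, ↑P ⊆ B ∧ (P : Set S).Pairwise (δ ≤ dist · ·) ∧ P.card = packNum B δ :=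
  Nat.sSup_mem (s := packingCards B δ) ⟨0, ∅, by simp⟩ (bddAbove_packingCards hB hδ)

theorem packNum_pos (hB : TotallyBounded B) (hne : B.Nonempty) (hδ : 0 < δ) :
    0 < packNum B δ := by
  obtain ⟨x, hx⟩ := hne
  exact card_le_packNum hB hδ (P := {x}) (by simpa using hx) (by simp)

theorem packNum_mono (hB' : TotallyBounded B') (hBB' : B ⊆ B') (hδ : 0 < δ) :
    packNum B δ ≤ packNum B' δ := by
  obtain ⟨P, hPB, hP, hcard⟩ := exists_packing_card_eq_packNum (hB'.subset hBB') hδ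
  exact hcard ▸ card_le_packNum hB' hδ (hPB.trans hBB') hP

theorem exists_dist_lt_of_card_eq_packNum (hB : TotallyBounded B) (hδ : 0 < δ)
    {P : Finset S} (hPB : ↑P ⊆ B) (hP : (P : Set S).Pairwise (δ ≤ dist · ·))
    (hcard : P.card = packNum B δ) {q : S} (hq : q ∈ B) : ∃ p ∈ P, dist q p < δ := by
  classical
  by_contra! hfar
  have hqP : q ∉ P := fun hqP => (hfar q hqP).not_gt (by simpa using hδ)
  have hinsert := card_le_packNum hB hδ (P := insert q P)
    (by simpa using insert_subset hq hPB)
    (by simpa using hP.insert fun p hp _ => ⟨hfar p hp, dist_comm q p ▸ hfar p hp⟩)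
  rw [Finset.card_insert_of_notMem hqP, hcard] at hinsert
  omega

theorem exists_packNum_le_mul_packNum_inter_closedBall (hB : TotallyBounded B)
    (hne : B.Nonempty) (hε : 0 < ε) (hδ : 0 < δ) :
    ∃ θ ∈ B, packNum B ε ≤ packNum B δ * packNum (B ∩ closedBall θ δ) ε := by
  classical
  obtain ⟨P, hPB, hP, hPcard⟩ := exists_packing_card_eq_packNum hB hδ
  obtain ⟨Q, hQB, hQ, hQcard⟩ := exists_packing_card_eq_packNum hB hε
  have hPne : P.Nonempty := Finset.card_pos.1 (hPcard ▸ packNum_pos hB hne hδ)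
  obtain ⟨θ, hθP, hθmax⟩ := P.exists_max_image (fun p => packNum (B ∩ closedBall p δ) ε) hPne
  have hnear : ∀ q ∈ Q, ∃ p ∈ P, dist q p < δ := fun q hq =>
    exists_dist_lt_of_card_eq_packNum hB hδ hPB hP hPcard (hQB hq)
  choose! c hcP hc using hnear
  refine ⟨θ, hPB hθP, ?_⟩
  rw [← hPcard, ← hQcard, mul_comm]
  refine Finset.card_le_mul_card_image_of_maps_to hcP _ fun p hp =>
    (card_le_packNum (hB.subset inter_subset_left) hε ?_ ?_).trans (hθmax p hp)
  · intro q hq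
    obtain ⟨hqQ, rfl⟩ := Finset.mem_filter.1 hq
    exact ⟨hQB hqQ, mem_closedBall.2 (hc q hqQ).le⟩
  · exact hQ.mono (Finset.coe_subset.2 (Finset.filter_subset _ _))

end Packing

/-- Relationship between global and local metric entropies:
`M(δ/2) − M(δ) ≤ M^loc(δ) ≤ M(δ/2)`, where `M(δ)` is the log of the maximal
`δ`-packing number of the space and `M^loc(δ)` is the maximum over centers `θ` of
the log of the largest `(δ/2)`-packing of the ball `B(θ, δ)`. -/
theorem global_local_entropy {S : Type*} [PseudoMetricSpace S] [Nonempty S]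
    (htb : TotallyBounded (Set.univ : Set S)) (δ : ℝ) (hδ : 0 < δ) :
    Real.log (packNum (Set.univ : Set S) (δ / 2)) - Real.log (packNum (Set.univ : Set S) δ)
        ≤ ⨆ θ : S, Real.log (packNum (closedBall θ δ) (δ / 2)) ∧
    (⨆ θ : S, Real.log (packNum (closedBall θ δ) (δ / 2)))
        ≤ Real.log (packNum (Set.univ : Set S) (δ / 2)) := by
  have hδ2 : 0 < δ / 2 := half_pos hδ
  have hlocal_pos (θ : S) : (0 : ℝ) < packNum (closedBall θ δ) (δ / 2) := by
    exact_mod_cast packNum_pos (htb.subset (subset_univ _)) ⟨θ, mem_closedBall_self hδ.le⟩ hδ2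
  have hlocal_le (θ : S) : Real.log (packNum (closedBall θ δ) (δ / 2))
      ≤ Real.log (packNum (Set.univ : Set S) (δ / 2)) :=
    Real.log_le_log (hlocal_pos θ) (by exact_mod_cast packNum_mono htb (subset_univ _) hδ2)
  refine ⟨?_, ciSup_le hlocal_le⟩
  obtain ⟨θ, -, hcount⟩ :=
    exists_packNum_le_mul_packNum_inter_closedBall htb univ_nonempty hδ2 hδ
  rw [univ_inter] at hcount
  have hglobal_pos : (0 : ℝ) < packNum (Set.univ : Set S) δ := by
    exact_mod_cast packNum_pos htb univ_nonempty hδ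
  have hfine_pos : (0 : ℝ) < packNum (Set.univ : Set S) (δ / 2) := by
    exact_mod_cast packNum_pos htb univ_nonempty hδ2
  calc Real.log (packNum (Set.univ : Set S) (δ / 2)) - Real.log (packNum (Set.univ : Set S) δ)
      ≤ Real.log (packNum (Set.univ : Set S) δ * packNum (closedBall θ δ) (δ / 2))
          - Real.log (packNum (Set.univ : Set S) δ) := by
        gcongr
        exact_mod_cast hcount
    _ = Real.log (packNum (closedBall θ δ) (δ / 2)) := by
        rw [Real.log_mul hglobal_pos.ne' (hlocal_pos θ).ne']
        ring
    _ ≤ ⨆ θ : S, Real.log (packNum (closedBall θ δ) (δ / 2)) :=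
        le_ciSup ⟨_, forall_mem_range.2 hlocal_le⟩ θ
end
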